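/- arXiv:2009.08628 — 4 statements merged into one kernel-verified Lean document; each statement's English description precedes it below -/
import Mathlib

section
/- Let ι be a set of agents, for each agent i let A i be its nonempty set of task assignments, and let G : (Π i, A i) → ℝ be any team utility function. Fix for each agent i a null assignment nul i ∈ A i, and define each agent's individual (wonderful-life) utility by U i a = G a − G (Function.update a i (nul i)). Then G is an exact potential for the game with utilities U i: for every profile a, every agent i, and every alternative action b ∈ A i, U i (Function.update a i b) − U i a = G (Function.update a i b) − G a. -/
/-- The team utility `G` is an exact potential for the game whose
individual utilities are the wonderful-life utilities `U i a = G a - G (a with i's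
action replaced by the null assignment)`. -/
theorem wlu_team_utility_is_exact_potential
    {ι : Type*} [DecidableEq ι] {A : ι → Type*} [∀ i, Nonempty (A i)]
    (G : (∀ i, A i) → ℝ) (nul : ∀ i, A i)
    (U : ∀ _ : ι, (∀ i, A i) → ℝ)
    (hU : ∀ (i : ι) (a : ∀ i, A i),
      U i a = G a - G (Function.update a i (nul i))) :
    ∀ (a : ∀ i, A i) (i : ι) (b : A i),
      U i (Function.update a i b) - U i a
        = G (Function.update a i b) - G a := by
  intro a i b
  rw [hU, hU, Function.update_idem]
  ring
end

section
/- Let ι be a finite set of agents, τ a finite set of tasks, and for each agent i let A i be a set of assignments each of which is either a task in τ or the null assignment. For each task j let u j : (Π i, A i) → ℝ be a (state-parameterized) task utility, define the team utility U a = Σ_{j ∈ τ} u j a, and define each agent's individual utility as her marginal contribution U i a = U a − U (Function.update a i nul), where nul denotes the null assignment. Then the resulting game is an exact potential game with potential P = U: for every profile a, every agent i, and every b ∈ A i, U i (Function.update a i b) − U i a = U (Function.update a i b) − U a. -/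
/-- The task-allocation game, where each agent's actions are tasks in `τ`
or the null assignment `none`, the team utility is the sum of the task utilities, and
each agent's individual utility is her marginal contribution to the team utility,
is an exact potential game with the team utility as potential. -/
theorem task_allocation_is_exact_potential_game
    {ι : Type*} [Fintype ι] [DecidableEq ι] {τ : Type*} [Fintype τ]
    (A : ι → Set (Option τ)) (hnul : ∀ i, (none : Option τ) ∈ A i)
    (u : τ → (∀ i, A i) → ℝ)
    (U : (∀ i, A i) → ℝ)
    (hUteam : ∀ a, U a = ∑ j : τ, u j a)
    (Ui : ∀ _ : ι, (∀ i, A i) → ℝ)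
    (hUi : ∀ (i : ι) (a : ∀ i, A i),
      Ui i a = U a - U (Function.update a i ⟨none, hnul i⟩)) :
    ∀ (a : ∀ i, A i) (i : ι) (b : A i),
      Ui i (Function.update a i b) - Ui i a
        = U (Function.update a i b) - U a := by
  intro a i b
  rw [hUi, hUi, Function.update_idem]
  ring
end

section
/- Let ι be a finite set of agents and τ a finite set of tasks, with each agent's action being either a task in τ or the null assignment nul. Suppose each task utility u j : (Π i, A i) → ℝ is fully local in the sense that u j (Function.update a i b) = u j a whenever a i ≠ j and b ≠ j. Then for every profile a, every agent i with a i = c, and every alternative action b ≠ c, the team utility difference for the unilateral deviation decomposes over the two affected tasks: Σ_{k ∈ τ} u k (Function.update a i b) − Σ_{k ∈ τ} u k a = (u c (Function.update a i b) − u c a) + (u b (Function.update a i b) − u b a) when both b and c are tasks (with the corresponding term omitted when b or c equals nul). -/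
open Finset

namespace Fintype

variable {τ M : Type*} [Fintype τ] [AddCommMonoid M]

theorem sum_ite_some_eq_optionElim [DecidableEq τ] (x : Option τ) (f : τ → M) :
    ∑ k, (if x = some k then f k else 0) = x.elim 0 f := by
  cases x <;> simp

theorem sum_eq_optionElim_add_optionElim {x y : Option τ} (hxy : x ≠ y) (f : τ → M)
    (hf : ∀ k, x ≠ some k → y ≠ some k → f k = 0) :
    ∑ k, f k = x.elim 0 f + y.elim 0 f := by
  classical
  have hsplit : ∀ k, f k = (if x = some k then f k else 0) + (if y = some k then f k else 0) := by
    intro k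
    by_cases hx : x = some k
    · have hy : y ≠ some k := hx ▸ hxy.symm
      simp [hx, hy]
    · by_cases hy : y = some k <;> simp [hx, hy, hf]
  rw [sum_congr _ _ hsplit, sum_add_distrib, sum_ite_some_eq_optionElim,
    sum_ite_some_eq_optionElim]

end Fintype

theorem team_utility_difference_decomposes_over_affected_tasks_general
    {ι : Type*} [DecidableEq ι] {τ : Type*} [Fintype τ]
    (A : ι → Set (Option τ))
    (u : τ → (∀ i, A i) → ℝ)
    (hlocal : ∀ (j : τ) (a : ∀ i, A i) (i : ι) (b : A i),
      (a i : Option τ) ≠ some j → (b : Option τ) ≠ some j →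
      u j (Function.update a i b) = u j a)
    (a : ∀ i, A i) (i : ι) (b : A i)
    (hbc : (b : Option τ) ≠ (a i : Option τ)) :
    (∑ k : τ, u k (Function.update a i b)) - (∑ k : τ, u k a)
      = Option.elim (a i : Option τ) 0
          (fun c => u c (Function.update a i b) - u c a)
        + Option.elim (b : Option τ) 0
          (fun c => u c (Function.update a i b) - u c a) := by
  rw [← sum_sub_distrib]
  exact Fintype.sum_eq_optionElim_add_optionElim hbc.symm _
    fun k hak hbk => sub_eq_zero.mpr (hlocal k a i b hak hbk)

/-- If each task utility is fully local (`u j` depends only on the actions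
of agents assigned to task `j`), then the team-utility difference for a unilateral
deviation of agent `i` from action `c = a i` to a different action `b` decomposes over
the two affected tasks; the term corresponding to `b` (resp. `c`) is omitted (i.e., `0`)
when the action is the null assignment `none`. -/
theorem team_utility_difference_decomposes_over_affected_tasks
    {ι : Type*} [Fintype ι] [DecidableEq ι] {τ : Type*} [Fintype τ]
    (A : ι → Set (Option τ))
    (u : τ → (∀ i, A i) → ℝ)
    (hlocal : ∀ (j : τ) (a : ∀ i, A i) (i : ι) (b : A i),
      (a i : Option τ) ≠ some j → (b : Option τ) ≠ some j →
      u j (Function.update a i b) = u j a)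
    (a : ∀ i, A i) (i : ι) (b : A i)
    (hbc : (b : Option τ) ≠ (a i : Option τ)) :
    (∑ k : τ, u k (Function.update a i b)) - (∑ k : τ, u k a)
      = Option.elim (a i : Option τ) 0
          (fun c => u c (Function.update a i b) - u c a)
        + Option.elim (b : Option τ) 0
          (fun c => u c (Function.update a i b) - u c a) :=
  team_utility_difference_decomposes_over_affected_tasks_general A u hlocal a i b hbc
end

section
/- Fix tf > 0, p0, v0, pT ∈ ℝ². Set d = pT − p0 − tf • v0, α = (6 / tf²) • d + (2 / tf) • v0, β = −(12 / tf³) • d − (6 / tf²) • v0, and ρ = (1/2) (tf * ‖α‖² + tf² * ⟪α, β⟫ + (tf³ / 3) * ‖β‖²). Let u : ℝ → ℝ² be square-integrable on [0, tf] and suppose it steers the double integrator from (p0, v0) at time 0 to (pT, 0) at time tf, i.e., ∫ t in (0 : ℝ)..tf, u t = −v0 and ∫ t in (0 : ℝ)..tf, (tf − t) • u t = pT − p0 − tf • v0. Then the energy cost of u is at least the optimal cost-to-go: (1/2) ∫ t in (0 : ℝ)..tf, ‖u t‖² ≥ ρ, with equality when u(t) = α + t • β. -/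
/-!
The energy is the squared `L²` norm of the control, and the two steering conditions fix the
moments `∫ u` and `∫ t • u`. The affine control `w t = α + t • β` has exactly these moments,
and `⟪w t, u t⟫` is affine in `(u t, t • u t)`, so `∫ ⟪w, u⟫ = ∫ ‖w‖²`. Hence
`∫ ‖u - w‖² = ∫ ‖u‖² - ∫ ‖w‖²`, and the lower bound is `0 ≤ ∫ ‖u - w‖²` with
`∫ ‖w‖² = 2 ρ`.
-/

open scoped RealInnerProductSpace Interval
open MeasureTheory

theorem steering_coeffs_moments {V : Type*} [AddCommGroup V] [Module ℝ V] {T : ℝ} (hT : T ≠ 0)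
    {d v0 α β : V} (hα : α = (6 / T ^ 2) • d + (2 / T) • v0)
    (hβ : β = -((12 / T ^ 3) • d) - (6 / T ^ 2) • v0) :
    T • α + (T ^ 2 / 2) • β = -v0 ∧ (T ^ 2 / 2) • α + (T ^ 3 / 3) • β = -(T • v0) - d := by
  subst hα hβ
  constructor <;> match_scalars <;> field_simp <;> ring

variable {E : Type*} [NormedAddCommGroup E]

theorem IntervalIntegrable.of_sq_norm {u : ℝ → E} {a b : ℝ}
    (hmeas : AEStronglyMeasurable u (volume.restrict (Ι a b)))
    (hu2 : IntervalIntegrable (fun t => ‖u t‖ ^ 2) volume a b) :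
    IntervalIntegrable u volume a b := by
  rw [intervalIntegrable_iff, Set.uIoc] at hu2 ⊢
  rw [Set.uIoc] at hmeas
  exact ((memLp_two_iff_integrable_sq_norm hmeas).2 hu2).integrable one_le_two

section NormedSpace

variable [NormedSpace ℝ E]

theorem not_intervalIntegrable_sub_smul {u : ℝ → E} {a b : ℝ} (c : ℝ)
    (hmeas : ¬ AEStronglyMeasurable u (volume.restrict (Ι a b))) :
    ¬ IntervalIntegrable (fun t => (c - t) • u t) volume a b := by
  intro hcu
  have hinv : Measurable fun t : ℝ => (c - t)⁻¹ := (measurable_const.sub measurable_id).inv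
  refine hmeas ((hinv.aestronglyMeasurable.smul hcu.def'.aestronglyMeasurable).congr ?_)
  have hc : ∀ᵐ t ∂volume, t ≠ c := by
    simp [ae_iff]
  filter_upwards [ae_restrict_of_ae hc] with t ht
  rw [Pi.smul_apply', smul_smul, inv_mul_cancel₀ (sub_ne_zero.2 ht.symm), one_smul]

theorem intervalIntegral.integral_smul_eq_sub_smul {u : ℝ → E} {a b : ℝ}
    (hu : IntervalIntegrable u volume a b) (c : ℝ) :
    ∫ t in a..b, t • u t = c • (∫ t in a..b, u t) - ∫ t in a..b, (c - t) • u t := by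
  have htu : IntervalIntegrable (fun t => t • u t) volume a b :=
    hu.continuousOn_smul continuousOn_id
  simp only [sub_smul]
  rw [intervalIntegral.integral_sub (hu.continuousOn_smul continuousOn_const) htu,
    intervalIntegral.integral_smul]
  abel

variable [CompleteSpace E]

theorem integral_add_smul (α β : E) (T : ℝ) :
    ∫ t in (0 : ℝ)..T, α + t • β = T • α + (T ^ 2 / 2) • β := by
  rw [intervalIntegral.integral_add intervalIntegrable_const
      (Continuous.intervalIntegrable (by fun_prop) _ _),
    intervalIntegral.integral_const, intervalIntegral.integral_smul_const, integral_id]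
  simp

theorem integral_smul_add_smul (α β : E) (T : ℝ) :
    ∫ t in (0 : ℝ)..T, t • (α + t • β) = (T ^ 2 / 2) • α + (T ^ 3 / 3) • β := by
  simp only [smul_add, smul_smul, ← sq]
  rw [intervalIntegral.integral_add (Continuous.intervalIntegrable (by fun_prop) _ _)
      (Continuous.intervalIntegrable (by fun_prop) _ _),
    intervalIntegral.integral_smul_const, intervalIntegral.integral_smul_const, integral_id,
    integral_pow]
  norm_num

end NormedSpace

section InnerProductSpace

variable [InnerProductSpace ℝ E]

theorem IntervalIntegrable.const_inner {u : ℝ → E} {a b : ℝ}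
    (hu : IntervalIntegrable u volume a b) (c : E) :
    IntervalIntegrable (fun t => ⟪c, u t⟫) volume a b :=
  ⟨hu.1.const_inner c, hu.2.const_inner c⟩

theorem inner_add_smul_left_eq (α β x : E) (t : ℝ) :
    ⟪α + t • β, x⟫ = ⟪α, x⟫ + ⟪β, t • x⟫ := by
  rw [inner_add_left, real_inner_smul_left, real_inner_smul_right]

theorem norm_add_smul_sq (α β : E) (t : ℝ) :
    ‖α + t • β‖ ^ 2 = ‖α‖ ^ 2 + 2 * ⟪α, β⟫ * t + ‖β‖ ^ 2 * t ^ 2 := by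
  rw [norm_add_sq_real, real_inner_smul_right, norm_smul, mul_pow, Real.norm_eq_abs, sq_abs]
  ring

theorem integral_norm_add_smul_sq (α β : E) (T : ℝ) :
    ∫ t in (0 : ℝ)..T, ‖α + t • β‖ ^ 2
      = T * ‖α‖ ^ 2 + T ^ 2 * ⟪α, β⟫ + (T ^ 3 / 3) * ‖β‖ ^ 2 := by
  simp only [norm_add_smul_sq]
  rw [intervalIntegral.integral_add (Continuous.intervalIntegrable (by fun_prop) _ _)
      (Continuous.intervalIntegrable (by fun_prop) _ _),
    intervalIntegral.integral_add intervalIntegrable_const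
      (Continuous.intervalIntegrable (by fun_prop) _ _),
    intervalIntegral.integral_const, intervalIntegral.integral_const_mul,
    intervalIntegral.integral_const_mul, integral_id, integral_pow]
  simp only [smul_eq_mul]
  ring

variable [CompleteSpace E]

theorem intervalIntegral.integral_const_inner {u : ℝ → E} {a b : ℝ}
    (hu : IntervalIntegrable u volume a b) (c : E) :
    ∫ t in a..b, ⟪c, u t⟫ = ⟪c, ∫ t in a..b, u t⟫ :=
  (innerSL ℝ c).intervalIntegral_comp_comm hu

theorem integral_inner_add_smul_left {u : ℝ → E} {a b : ℝ} (α β : E)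
    (hu : IntervalIntegrable u volume a b) :
    ∫ t in a..b, ⟪α + t • β, u t⟫ = ⟪α, ∫ t in a..b, u t⟫ + ⟪β, ∫ t in a..b, t • u t⟫ := by
  have htu : IntervalIntegrable (fun t => t • u t) volume a b :=
    hu.continuousOn_smul continuousOn_id
  simp only [inner_add_smul_left_eq]
  rw [intervalIntegral.integral_add (hu.const_inner α) (htu.const_inner β),
    intervalIntegral.integral_const_inner hu, intervalIntegral.integral_const_inner htu]

theorem integral_norm_sub_add_smul_sq {u : ℝ → E} {a b : ℝ} (α β : E)
    (hu : IntervalIntegrable u volume a b)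
    (hu2 : IntervalIntegrable (fun t => ‖u t‖ ^ 2) volume a b)
    (hmom0 : ∫ t in a..b, u t = ∫ t in a..b, α + t • β)
    (hmom1 : ∫ t in a..b, t • u t = ∫ t in a..b, t • (α + t • β)) :
    ∫ t in a..b, ‖u t - (α + t • β)‖ ^ 2
      = (∫ t in a..b, ‖u t‖ ^ 2) - ∫ t in a..b, ‖α + t • β‖ ^ 2 := by
  have hw : Continuous fun t : ℝ => α + t • β := by fun_prop
  have hcross : ∫ t in a..b, ⟪α + t • β, u t⟫ = ∫ t in a..b, ‖α + t • β‖ ^ 2 := by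
    simp only [← real_inner_self_eq_norm_sq]
    rw [integral_inner_add_smul_left α β hu, integral_inner_add_smul_left α β
      (hw.intervalIntegrable _ _), hmom0, hmom1]
  have hcross_int : IntervalIntegrable (fun t => ⟪α + t • β, u t⟫) volume a b := by
    have htu : IntervalIntegrable (fun t => t • u t) volume a b :=
      hu.continuousOn_smul continuousOn_id
    simpa only [inner_add_smul_left_eq] using (hu.const_inner α).add (htu.const_inner β)
  have hexpand : ∀ t, ‖u t - (α + t • β)‖ ^ 2
      = ‖u t‖ ^ 2 - 2 * ⟪α + t • β, u t⟫ + ‖α + t • β‖ ^ 2 := fun t => by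
    rw [norm_sub_sq_real, real_inner_comm]
  simp only [hexpand]
  rw [intervalIntegral.integral_add (hu2.sub (hcross_int.const_mul 2))
      (Continuous.intervalIntegrable (by fun_prop) _ _),
    intervalIntegral.integral_sub hu2 (hcross_int.const_mul 2),
    intervalIntegral.integral_const_mul, hcross]
  ring

end InnerProductSpace

/-- Any square-integrable control `u` steering the double integrator
from `(p0, v0)` at time `0` to `(pT, 0)` at time `tf` (expressed via the two moment
conditions) has energy cost at least the optimal cost-to-go `ρ`, with equality when
`u(t) = α + t • β`. -/
theorem double_integrator_energy_lower_bound
    (tf : ℝ) (htf : 0 < tf)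
    (p0 v0 pT : EuclideanSpace ℝ (Fin 2))
    (d α β : EuclideanSpace ℝ (Fin 2)) (ρ : ℝ)
    (hd : d = pT - p0 - tf • v0)
    (hα : α = (6 / tf ^ 2) • d + (2 / tf) • v0)
    (hβ : β = -((12 / tf ^ 3) • d) - (6 / tf ^ 2) • v0)
    (hρ : ρ = (1 / 2) * (tf * ‖α‖ ^ 2 + tf ^ 2 * ⟪α, β⟫ + (tf ^ 3 / 3) * ‖β‖ ^ 2))
    (u : ℝ → EuclideanSpace ℝ (Fin 2))
    (hu2 : IntervalIntegrable (fun t => ‖u t‖ ^ 2) volume 0 tf)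
    (hmom0 : (∫ t in (0 : ℝ)..tf, u t) = -v0)
    (hmom1 : (∫ t in (0 : ℝ)..tf, (tf - t) • u t) = pT - p0 - tf • v0) :
    (1 / 2) * (∫ t in (0 : ℝ)..tf, ‖u t‖ ^ 2) ≥ ρ ∧
    ((∀ t : ℝ, u t = α + t • β) →
      (1 / 2) * (∫ t in (0 : ℝ)..tf, ‖u t‖ ^ 2) = ρ) := by
  have hw : ∫ t in (0 : ℝ)..tf, ‖α + t • β‖ ^ 2 = 2 * ρ := by
    rw [integral_norm_add_smul_sq, hρ]
    ring
  refine ⟨?_, fun hu => by simp only [hu, hw]; ring⟩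
  rw [← hd] at hmom1
  obtain ⟨hw0, hw1⟩ := steering_coeffs_moments htf.ne' hα hβ
  by_cases hmeas : AEStronglyMeasurable u (volume.restrict (Ι 0 tf))
  · have hu : IntervalIntegrable u volume 0 tf := .of_sq_norm hmeas hu2
    have htu_int : ∫ t in (0 : ℝ)..tf, t • u t = -(tf • v0) - d := by
      rw [intervalIntegral.integral_smul_eq_sub_smul hu tf, hmom0, hmom1, smul_neg]
    have hgap := integral_norm_sub_add_smul_sq α β hu hu2
      (by rw [hmom0, integral_add_smul, hw0]) (by rw [htu_int, integral_smul_add_smul, hw1])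
    have hnonneg := intervalIntegral.integral_nonneg (μ := volume) htf.le
      fun t _ => sq_nonneg ‖u t - (α + t • β)‖
    linarith
  · -- Without measurability both moment integrals are the junk value `0`, so `v0 = d = 0`.
    have hv0 : v0 = 0 := by
      rw [← neg_eq_zero, ← hmom0, intervalIntegral.integral_undef
        fun hu => hmeas hu.def'.aestronglyMeasurable]
    have hd0 : d = 0 := by
      rw [← hmom1, intervalIntegral.integral_undef (not_intervalIntegrable_sub_smul tf hmeas)]
    have hρ0 : ρ = 0 := by
      simp [hρ, hα, hβ, hv0, hd0]
    have hnonneg := intervalIntegral.integral_nonneg (μ := volume) htf.le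
      fun t _ => sq_nonneg ‖u t‖
    linarith
end
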